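/- arXiv:2604.21619 — 2 statements merged into one kernel-verified Lean document; each statement's English description precedes it below -/
import Mathlib

section
/- With ℓ = ⌊n/2⌋ and ε = 1 if n is even, ε = 0 if n is odd, the following multiplication rules hold in the group algebra F[W] of the type I₂(n) Coxeter group W: x₁·x₁ = (1+ε)·x₁ + (ℓ−ε)·x₃; x₁·x₂ = (1−ε)·x₂ + ℓ·x₃; x₂·x₁ = (1−ε)·x₁ + ℓ·x₃; x₂·x₂ = (1+ε)·x₂ + (ℓ−ε)·x₃; x₁·x₃ = x₃·x₁ = x₂·x₃ = x₃·x₂ = n·x₃; and x₃·x₃ = 2n·x₃, where all integer coefficients are interpreted via the canonical map ℕ → F. -/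
open Classical in
/-- The element `x_J = ∑_{w ∈ X_J} w` of the group algebra, where
`X_J = {w : ℓ(w sᵢ) > ℓ(w) for all i ∈ J}`. -/
noncomputable def descentElt (F : Type*) [Field F] {B W : Type*} [Group W] [Fintype W]
    {M : CoxeterMatrix B} (cs : CoxeterSystem M W) (J : Set B) : MonoidAlgebra F W :=
  ∑ w : W, if ∀ i ∈ J, cs.length w < cs.length (w * cs.simple i)
    then MonoidAlgebra.of F W w else 0

/-!
Put `ρ = s₀ s₁` and `altProd k = s₁^(k mod 2) ρ^⌊k/2⌋` for `k : ℤ`; for `k ≥ 0` it is the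
product of the alternating word `⋯ s₀ s₁` of length `k`. The rule
`altProd a * altProd b = altProd (a + b)` for even `b` and `altProd (b - a)` for odd `b` makes
`k ↦ altProd k` a bijection from any `2n` consecutive integers onto `W` (injectivity is read off
in `DihedralGroup n`), and gives `ℓ (altProd k) = |k|` for `|k| ≤ n`: multiplying out a reduced
word of `w` letter by letter writes `w = altProd j` with `|j| ≤ ℓ w`, and `j ≡ k` modulo `2n`
forces `|j| ≥ |k|`.

Hence `x₁` and `x₂` are the sums over the arcs `[0, n)` and `[1 - n, 1)` of indices, right
multiplication by `altProd b` carries an arc to an arc, and two complementary arcs add up to `x₃`.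
Expanding `x_i x_j` into `n` arcs, consecutive arcs pair off into copies of `x₃`, and the one or two
arcs left over, depending on the parity of `n`, equal `x_i`.
-/

open Finset

section PairSums

variable {A : Type*} [AddCommMonoid A]

lemma sum_range_two_mul_eq_of_pairs (f : ℕ → A) (c : A) (hpair : ∀ i, f (2 * i) + f (2 * i + 1) = c)
    (q : ℕ) : ∑ j ∈ range (2 * q), f j = q • c := by
  induction q with
  | zero => simp
  | succ q ih => rw [mul_add_one, sum_range_succ, sum_range_succ, ih, add_assoc, hpair, succ_nsmul]

lemma sum_range_eq_of_pairs (f : ℕ → A) (c x : A) (n : ℕ)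
    (hpair : ∀ i, f (2 * i) + f (2 * i + 1) = c)
    (hlast : Odd n → f (n - 1) = x) :
    ∑ j ∈ range n, f j = (1 - if Even n then 1 else 0) • x + (n / 2) • c := by
  obtain ⟨q, rfl | rfl⟩ := Nat.even_or_odd' n
  · simp [sum_range_two_mul_eq_of_pairs f c hpair]
  · rw [sum_range_succ, sum_range_two_mul_eq_of_pairs f c hpair, ← hlast (odd_two_mul_add_one q),
      if_neg (Nat.not_even_iff_odd.2 (odd_two_mul_add_one q)), show (2 * q + 1) / 2 = q by omega,
      Nat.add_sub_cancel, Nat.sub_zero, one_smul, add_comm]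

lemma sum_range_eq_of_shifted_pairs (f : ℕ → A) (c x : A) {n : ℕ} (hn : 0 < n)
    (hpair : ∀ i, f (2 * i + 1) + f (2 * i + 2) = c) (hfirst : f 0 = x)
    (hlast : Even n → f (n - 1) = x) :
    ∑ j ∈ range n, f j
      = (1 + if Even n then 1 else 0) • x + (n / 2 - if Even n then 1 else 0) • c := by
  obtain ⟨n, rfl⟩ := Nat.exists_eq_add_of_lt hn
  rw [zero_add] at hlast ⊢
  rw [sum_range_succ', hfirst, sum_range_eq_of_pairs (fun j ↦ f (j + 1)) c x n hpair
    fun h ↦ by simpa [Nat.sub_add_cancel h.pos] using hlast h.add_one]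
  obtain ⟨q, rfl | rfl⟩ := Nat.even_or_odd' n
  · rw [if_pos (even_two_mul q), if_neg (Nat.not_even_iff_odd.2 (odd_two_mul_add_one q)),
      show (2 * q + 1) / 2 = q by omega]
    simp [add_comm]
  · rw [if_neg (Nat.not_even_iff_odd.2 (odd_two_mul_add_one q)), if_pos ⟨q + 1, by ring⟩,
      show (2 * q + 1) / 2 = q by omega, show (2 * q + 1 + 1) / 2 - 1 = q by omega]
    simp [add_comm, two_nsmul, add_assoc]

end PairSums

section GroupAlgebra

variable {R G : Type*} [Semiring R] [Group G] [Fintype G]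

lemma MonoidAlgebra.of_mul_sum_univ_of (g : G) :
    MonoidAlgebra.of R G g * ∑ h, MonoidAlgebra.of R G h = ∑ h, MonoidAlgebra.of R G h := by
  simp_rw [mul_sum, ← map_mul]
  exact (Group.mulLeft_bijective g).sum_comp (MonoidAlgebra.of R G)

lemma MonoidAlgebra.sum_univ_of_mul_of (g : G) :
    (∑ h, MonoidAlgebra.of R G h) * MonoidAlgebra.of R G g = ∑ h, MonoidAlgebra.of R G h := by
  simp_rw [sum_mul, ← map_mul]
  exact (Group.mulRight_bijective g).sum_comp (MonoidAlgebra.of R G)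

lemma MonoidAlgebra.sum_univ_of_mul_self :
    (∑ g, MonoidAlgebra.of R G g) * ∑ g, MonoidAlgebra.of R G g
      = Fintype.card G • ∑ g, MonoidAlgebra.of R G g := by
  simp_rw [sum_mul, MonoidAlgebra.of_mul_sum_univ_of, sum_const, card_univ]

end GroupAlgebra

lemma descentElt_empty (F : Type*) [Field F] {B W : Type*} [Group W] [Fintype W]
    {M : CoxeterMatrix B} (cs : CoxeterSystem M W) :
    descentElt F cs ∅ = ∑ w, MonoidAlgebra.of F W w := by
  simp [descentElt]

open DihedralGroup in
lemma CoxeterMatrix.isLiftable_I_sr (m : ℕ) :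
    (CoxeterMatrix.I m).IsLiftable fun i : Fin 2 ↦ sr (i.val : ZMod (m + 2)) := by
  intro i i'
  fin_cases i <;> fin_cases i' <;> simp [CoxeterMatrix.I, sr_mul_sr]

namespace CoxeterSystem

section Dihedral

variable {W : Type*} [Group W] {m : ℕ} (cs : CoxeterSystem (CoxeterMatrix.I m) W)

noncomputable def altProd (k : ℤ) : W :=
  (if Even k then 1 else cs.simple 1) * (cs.simple 0 * cs.simple 1) ^ (k / 2)

lemma simple_one_mul_zpow (k : ℤ) :
    cs.simple 1 * (cs.simple 0 * cs.simple 1) ^ k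
      = (cs.simple 0 * cs.simple 1) ^ (-k) * cs.simple 1 := by
  have h : SemiconjBy (cs.simple 1) (cs.simple 0 * cs.simple 1)
      (cs.simple 0 * cs.simple 1)⁻¹ := by
    simp only [SemiconjBy, mul_inv_rev, inv_simple, ← mul_assoc]
  have := (h.zpow_right k).eq
  rwa [inv_zpow'] at this

lemma zpow_mul_simple_one (k : ℤ) :
    (cs.simple 0 * cs.simple 1) ^ k * cs.simple 1
      = cs.simple 1 * (cs.simple 0 * cs.simple 1) ^ (-k) := by
  rw [simple_one_mul_zpow, neg_neg]

lemma altProd_two_mul (p : ℤ) : cs.altProd (2 * p) = (cs.simple 0 * cs.simple 1) ^ p := by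
  simp [altProd]

lemma altProd_two_mul_add_one (p : ℤ) :
    cs.altProd (2 * p + 1) = cs.simple 1 * (cs.simple 0 * cs.simple 1) ^ p := by
  rw [altProd, if_neg (by simp), show (2 * p + 1) / 2 = p by omega]

lemma altProd_mul_altProd (a b : ℤ) :
    cs.altProd a * cs.altProd b = cs.altProd (if Even b then a + b else b - a) := by
  obtain ⟨p, rfl | rfl⟩ := Int.even_or_odd' a <;> obtain ⟨q, rfl | rfl⟩ := Int.even_or_odd' b
  · rw [if_pos (by simp), ← mul_add, altProd_two_mul, altProd_two_mul, altProd_two_mul, zpow_add]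
  · rw [if_neg (by simp), show 2 * q + 1 - 2 * p = 2 * (q - p) + 1 by ring,
      altProd_two_mul, altProd_two_mul_add_one, altProd_two_mul_add_one, ← mul_assoc,
      zpow_mul_simple_one, mul_assoc, ← zpow_add, neg_add_eq_sub]
  · rw [if_pos (by simp), show 2 * p + 1 + 2 * q = 2 * (p + q) + 1 by ring,
      altProd_two_mul, altProd_two_mul_add_one, altProd_two_mul_add_one, mul_assoc, ← zpow_add]
  · rw [if_neg (by simp), show 2 * q + 1 - (2 * p + 1) = 2 * (q - p) by ring,
      altProd_two_mul, altProd_two_mul_add_one, altProd_two_mul_add_one, mul_assoc,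
      ← mul_assoc _ (cs.simple 1), zpow_mul_simple_one, mul_assoc, simple_mul_simple_cancel_left,
      ← zpow_add, neg_add_eq_sub]

lemma altProd_zero : cs.altProd 0 = 1 := by simp [altProd]

lemma altProd_one : cs.altProd 1 = cs.simple 1 := by
  simpa using cs.altProd_two_mul_add_one 0

lemma altProd_neg_one : cs.altProd (-1) = cs.simple 0 := by
  simpa [zpow_neg, ← mul_assoc] using cs.altProd_two_mul_add_one (-1)

lemma altProd_mul_simple_zero (k : ℤ) : cs.altProd k * cs.simple 0 = cs.altProd (-1 - k) := by
  rw [← altProd_neg_one, altProd_mul_altProd, if_neg (by simp)]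

lemma altProd_mul_simple_one (k : ℤ) : cs.altProd k * cs.simple 1 = cs.altProd (1 - k) := by
  rw [← altProd_one, altProd_mul_altProd, if_neg (by simp)]

lemma simple_mul_simple_zpow_mul_eq_one (k : ℤ) :
    (cs.simple 0 * cs.simple 1) ^ ((m + 2 : ℤ) * k) = 1 := by
  rw [zpow_mul, show ((m + 2 : ℤ)) = ((m + 2 : ℕ) : ℤ) by push_cast; ring, zpow_natCast]
  simp [show (m + 2 : ℕ) = CoxeterMatrix.I m 0 1 from rfl, simple_mul_simple_pow]

lemma altProd_add_two_mul_mul (a k : ℤ) : cs.altProd (a + 2 * (m + 2) * k) = cs.altProd a := by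
  have h := cs.altProd_mul_altProd a (2 * ((m + 2) * k))
  rw [if_pos (even_two_mul _), altProd_two_mul, simple_mul_simple_zpow_mul_eq_one, mul_one] at h
  rw [h, mul_assoc]

noncomputable def toDihedralGroup : W →* DihedralGroup (m + 2) :=
  cs.lift ⟨_, CoxeterMatrix.isLiftable_I_sr m⟩

open DihedralGroup

lemma toDihedralGroup_altProd_two_mul (p : ℤ) : cs.toDihedralGroup (cs.altProd (2 * p)) = r p := by
  simp [toDihedralGroup, altProd_two_mul, sr_mul_sr]

lemma toDihedralGroup_altProd_two_mul_add_one (p : ℤ) :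
    cs.toDihedralGroup (cs.altProd (2 * p + 1)) = sr (1 + (p : ZMod (m + 2))) := by
  simp [toDihedralGroup, altProd_two_mul_add_one, sr_mul_sr, sr_mul_r]

lemma altProd_eq_altProd_iff {a b : ℤ} :
    cs.altProd a = cs.altProd b ↔ 2 * ((m : ℤ) + 2) ∣ b - a := by
  refine ⟨fun h ↦ ?_, fun ⟨k, hk⟩ ↦ ?_⟩
  · have hdvd {p q : ℤ} (hpq : (p : ZMod (m + 2)) = q) : 2 * ((m : ℤ) + 2) ∣ 2 * (q - p) := by
      rw [ZMod.intCast_eq_intCast_iff_dvd_sub] at hpq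
      exact mul_dvd_mul_left 2 (by exact_mod_cast hpq)
    obtain ⟨p, rfl | rfl⟩ := Int.even_or_odd' a <;> obtain ⟨q, rfl | rfl⟩ := Int.even_or_odd' b <;>
      have := congrArg cs.toDihedralGroup h <;>
      simp only [toDihedralGroup_altProd_two_mul, toDihedralGroup_altProd_two_mul_add_one,
        r.injEq, sr.injEq, add_right_inj, reduceCtorEq] at this
    · simpa [mul_sub] using hdvd this
    · simpa [mul_sub] using hdvd this
  · rw [show b = a + 2 * (m + 2) * k by linarith, altProd_add_two_mul_mul]

lemma exists_altProd_eq_wordProd (ω : List (Fin 2)) :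
    ∃ k, cs.altProd k = cs.wordProd ω ∧ k.natAbs ≤ ω.length := by
  induction ω using List.reverseRecOn with
  | nil => exact ⟨0, cs.altProd_zero, le_rfl⟩
  | append_singleton ω i ih =>
    obtain ⟨k, hk, hlen⟩ := ih
    rw [wordProd_append, wordProd_singleton, ← hk, List.length_append, List.length_singleton]
    fin_cases i
    · exact ⟨-1 - k, (cs.altProd_mul_simple_zero k).symm, by omega⟩
    · exact ⟨1 - k, (cs.altProd_mul_simple_one k).symm, by omega⟩

lemma exists_altProd_natAbs_le_length (w : W) : ∃ k, cs.altProd k = w ∧ k.natAbs ≤ cs.length w := by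
  obtain ⟨ω, hω, rfl⟩ := cs.exists_isReduced w
  rw [hω.eq]
  exact cs.exists_altProd_eq_wordProd ω

lemma length_altProd_le (k : ℤ) : cs.length (cs.altProd k) ≤ k.natAbs := by
  suffices h : ∀ j : ℕ, cs.length (cs.altProd j) ≤ j ∧ cs.length (cs.altProd (-j)) ≤ j by
    obtain ⟨j, rfl | rfl⟩ := Int.eq_nat_or_neg k
    exacts [(h j).1, by simpa using (h j).2]
  intro j
  induction j with
  | zero => simp [altProd_zero]
  | succ j ih =>
    have h₁ := cs.altProd_mul_simple_one (-j)
    have h₀ := cs.altProd_mul_simple_zero j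
    rw [sub_neg_eq_add, add_comm] at h₁
    rw [← neg_add', add_comm] at h₀
    push_cast
    rw [← h₁, ← h₀]
    constructor <;> grw [length_mul_le, length_simple] <;> omega

lemma length_altProd {k : ℤ} (hk : k.natAbs ≤ m + 2) : cs.length (cs.altProd k) = k.natAbs := by
  refine le_antisymm (cs.length_altProd_le k) ?_
  obtain ⟨j, hj, hjk⟩ := cs.exists_altProd_natAbs_le_length (cs.altProd k)
  have hdvd := (cs.altProd_eq_altProd_iff).1 hj
  have hjk' := hjk.trans (cs.length_altProd_le k)
  by_cases hlt : |k - j| < 2 * ((m : ℤ) + 2)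
  · have := Int.eq_zero_of_abs_lt_dvd hdvd hlt
    omega
  · rw [abs_lt] at hlt
    omega

lemma length_altProd_lt_length_mul_simple_zero_iff {k : ℤ} (hk₁ : -(m + 2) ≤ k) (hk₂ : k < m + 2) :
    cs.length (cs.altProd k) < cs.length (cs.altProd k * cs.simple 0) ↔ 0 ≤ k := by
  rw [altProd_mul_simple_zero, length_altProd _ (by omega), length_altProd _ (by omega)]
  omega

lemma length_altProd_lt_length_mul_simple_one_iff {k : ℤ} (hk₁ : -(m + 2) < k) (hk₂ : k ≤ m + 2) :
    cs.length (cs.altProd k) < cs.length (cs.altProd k * cs.simple 1) ↔ k ≤ 0 := by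
  rw [altProd_mul_simple_one, length_altProd _ (by omega), length_altProd _ (by omega)]
  omega

lemma sum_univ_eq_sum_range_altProd [Fintype W] {M : Type*} [AddCommMonoid M] (f : W → M) (a : ℤ) :
    ∑ w, f w = ∑ j ∈ range (2 * (m + 2)), f (cs.altProd (a + j)) := by
  symm
  refine sum_nbij (fun j ↦ cs.altProd (a + j)) (by simp) ?_ ?_ (fun _ _ ↦ rfl)
  · intro i hi j hj hij
    simp only [coe_range, Set.mem_Iio] at hi hj
    have := Int.eq_zero_of_abs_lt_dvd ((cs.altProd_eq_altProd_iff).1 hij) (by rw [abs_lt]; omega)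
    omega
  · intro w _
    obtain ⟨k, rfl, -⟩ := cs.exists_altProd_natAbs_le_length w
    have hpos : (0 : ℤ) < 2 * (m + 2) := by positivity
    refine ⟨((k - a) % (2 * (m + 2))).toNat, ?_, ?_⟩
    · simp only [coe_range, Set.mem_Iio]
      have := Int.emod_lt_of_pos (k - a) hpos
      omega
    · rw [altProd_eq_altProd_iff, Int.toNat_of_nonneg (Int.emod_nonneg _ hpos.ne')]
      exact ⟨(k - a) / (2 * (m + 2)), by linarith [Int.mul_ediv_add_emod (k - a) (2 * (m + 2))]⟩

end Dihedral

lemma card_eq_of_I {W : Type*} [Group W] [Fintype W] {m : ℕ}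
    (cs : CoxeterSystem (CoxeterMatrix.I m) W) : Fintype.card W = 2 * (m + 2) := by
  rw [Fintype.card_eq_sum_ones, cs.sum_univ_eq_sum_range_altProd _ 0, sum_const, card_range,
    smul_eq_mul, mul_one]

section ArcSum

variable {W : Type*} [Group W] {m : ℕ} (cs : CoxeterSystem (CoxeterMatrix.I m) W)
variable (R : Type*) [Semiring R]

open MonoidAlgebra

noncomputable def arcSum (a : ℤ) : MonoidAlgebra R W :=
  ∑ j ∈ range (m + 2), of R W (cs.altProd (a + j))

lemma arcSum_add_arcSum [Fintype W] (a : ℤ) :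
    cs.arcSum R a + cs.arcSum R (a + (m + 2)) = ∑ w, of R W w := by
  rw [cs.sum_univ_eq_sum_range_altProd _ a, two_mul, sum_range_add, arcSum, arcSum]
  congr 1
  refine sum_congr rfl fun j _ ↦ ?_
  push_cast
  ring_nf

lemma arcSum_mul_of_altProd_of_even {b : ℤ} (hb : Even b) (a : ℤ) :
    cs.arcSum R a * of R W (cs.altProd b) = cs.arcSum R (a + b) := by
  simp_rw [arcSum, sum_mul, ← map_mul, altProd_mul_altProd, if_pos hb]
  refine sum_congr rfl fun j _ ↦ ?_
  ring_nf

lemma arcSum_mul_of_altProd_of_odd {b : ℤ} (hb : Odd b) (a : ℤ) :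
    cs.arcSum R a * of R W (cs.altProd b) = cs.arcSum R (b - a - (m + 1)) := by
  simp_rw [arcSum, sum_mul, ← map_mul, altProd_mul_altProd, if_neg (Int.not_even_iff_odd.2 hb)]
  rw [← sum_range_reflect]
  refine sum_congr rfl fun j hj ↦ ?_
  rw [mem_range] at hj
  rw [show ((m + 2 - 1 - j : ℕ) : ℤ) = m + 1 - j by omega]
  ring_nf

lemma arcSum_mul_sum_univ_of [Fintype W] (a : ℤ) :
    cs.arcSum R a * ∑ w, of R W w = (m + 2) • ∑ w, of R W w := by
  rw [arcSum, sum_mul]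
  simp_rw [of_mul_sum_univ_of]
  rw [sum_const, card_range]

lemma sum_univ_of_mul_arcSum [Fintype W] (a : ℤ) :
    (∑ w, of R W w) * cs.arcSum R a = (m + 2) • ∑ w, of R W w := by
  rw [arcSum, mul_sum]
  simp_rw [sum_univ_of_mul_of]
  rw [sum_const, card_range]

lemma mul_arcSum_zero (x : MonoidAlgebra R W) :
    x * cs.arcSum R 0 = ∑ j ∈ range (m + 2), x * of R W (cs.altProd j) := by
  simp [arcSum, mul_sum]

lemma arcSum_neg_eq_sum :
    cs.arcSum R (-(m + 1)) = ∑ j ∈ range (m + 2), of R W (cs.altProd (-j)) := by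
  rw [arcSum, ← sum_range_reflect]
  refine sum_congr rfl fun j hj ↦ ?_
  rw [mem_range] at hj
  rw [show ((m + 2 - 1 - j : ℕ) : ℤ) = m + 1 - j by omega]
  ring_nf

lemma mul_arcSum_neg (x : MonoidAlgebra R W) :
    x * cs.arcSum R (-(m + 1)) = ∑ j ∈ range (m + 2), x * of R W (cs.altProd (-j)) := by
  rw [arcSum_neg_eq_sum, mul_sum]

section Products

variable [Fintype W]

lemma arcSum_zero_mul_arcSum_zero :
    cs.arcSum R 0 * cs.arcSum R 0
      = (1 + if Even (m + 2) then 1 else 0) • cs.arcSum R 0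
        + ((m + 2) / 2 - if Even (m + 2) then 1 else 0) • ∑ w, of R W w := by
  rw [mul_arcSum_zero]
  refine sum_range_eq_of_shifted_pairs _ _ _ (by omega) (fun i ↦ ?_) ?_ (fun hm ↦ ?_)
  · rw [arcSum_mul_of_altProd_of_odd _ _ (by simp [parity_simps]),
      arcSum_mul_of_altProd_of_even _ _ (by simp [parity_simps])]
    convert cs.arcSum_add_arcSum R (2 * i - m) using 3 <;> push_cast <;> ring
  · rw [Nat.cast_zero, altProd_zero, map_one, mul_one]
  · rw [arcSum_mul_of_altProd_of_odd _ _ (by simpa [parity_simps] using hm)]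
    congr 1
    omega

lemma arcSum_zero_mul_arcSum_neg :
    cs.arcSum R 0 * cs.arcSum R (-(m + 1))
      = (1 - if Even (m + 2) then 1 else 0) • cs.arcSum R (-(m + 1))
        + ((m + 2) / 2) • ∑ w, of R W w := by
  rw [mul_arcSum_neg]
  refine sum_range_eq_of_pairs _ _ _ _ (fun i ↦ ?_) (fun hm ↦ ?_)
  · rw [arcSum_mul_of_altProd_of_even _ _ (by simp [parity_simps]),
      arcSum_mul_of_altProd_of_odd _ _ (by simp [parity_simps]), add_comm]
    convert cs.arcSum_add_arcSum R (-2 * i - m - 2) using 3 <;> push_cast <;> ring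
  · rw [arcSum_mul_of_altProd_of_even _ _ (by simpa [parity_simps] using hm)]
    congr 1

lemma arcSum_neg_mul_arcSum_zero :
    cs.arcSum R (-(m + 1)) * cs.arcSum R 0
      = (1 - if Even (m + 2) then 1 else 0) • cs.arcSum R 0 + ((m + 2) / 2) • ∑ w, of R W w := by
  rw [mul_arcSum_zero]
  refine sum_range_eq_of_pairs _ _ _ _ (fun i ↦ ?_) (fun hm ↦ ?_)
  · rw [arcSum_mul_of_altProd_of_even _ _ (by simp [parity_simps]),
      arcSum_mul_of_altProd_of_odd _ _ (by simp [parity_simps])]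
    convert cs.arcSum_add_arcSum R (2 * i - m - 1) using 3 <;> push_cast <;> ring
  · rw [arcSum_mul_of_altProd_of_even _ _ (by simpa [parity_simps] using hm)]
    congr 1
    omega

lemma arcSum_neg_mul_arcSum_neg :
    cs.arcSum R (-(m + 1)) * cs.arcSum R (-(m + 1))
      = (1 + if Even (m + 2) then 1 else 0) • cs.arcSum R (-(m + 1))
        + ((m + 2) / 2 - if Even (m + 2) then 1 else 0) • ∑ w, of R W w := by
  rw [mul_arcSum_neg]
  refine sum_range_eq_of_shifted_pairs _ _ _ (by omega) (fun i ↦ ?_) ?_ (fun hm ↦ ?_)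
  · rw [arcSum_mul_of_altProd_of_odd _ _ (by simp [parity_simps]),
      arcSum_mul_of_altProd_of_even _ _ (by simp [parity_simps]), add_comm]
    convert cs.arcSum_add_arcSum R (-2 * i - m - 3) using 3 <;> push_cast <;> ring
  · rw [Nat.cast_zero, neg_zero, altProd_zero, map_one, mul_one]
  · rw [arcSum_mul_of_altProd_of_odd _ _ (by simpa [parity_simps] using hm)]
    congr 1
    omega
end Products

section Descent

variable (F : Type*) [Field F] [Fintype W]

lemma descentElt_singleton_zero : descentElt F cs {0} = cs.arcSum F 0 := by
  rw [descentElt, cs.sum_univ_eq_sum_range_altProd _ (-(m + 2)), two_mul, sum_range_add]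
  simp only [Set.mem_singleton_iff, forall_eq]
  rw [sum_eq_zero fun j hj ↦ if_neg ?_, zero_add, arcSum]
  · refine sum_congr rfl fun j hj ↦ ?_
    rw [mem_range] at hj
    rw [if_pos ((cs.length_altProd_lt_length_mul_simple_zero_iff (by omega) (by omega)).2
      (by omega))]
    congr 2
    push_cast
    ring
  · rw [mem_range] at hj
    rw [cs.length_altProd_lt_length_mul_simple_zero_iff (by omega) (by omega)]
    omega

lemma descentElt_singleton_one : descentElt F cs {1} = cs.arcSum F (-(m + 1)) := by
  rw [descentElt, cs.sum_univ_eq_sum_range_altProd _ (-(m + 1)), two_mul, sum_range_add]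
  simp only [Set.mem_singleton_iff, forall_eq]
  rw [add_comm, sum_eq_zero fun j hj ↦ if_neg ?_, zero_add, arcSum]
  · refine sum_congr rfl fun j hj ↦ ?_
    rw [mem_range] at hj
    rw [if_pos ((cs.length_altProd_lt_length_mul_simple_one_iff (by omega) (by omega)).2
      (by omega))]
  · rw [mem_range] at hj
    rw [cs.length_altProd_lt_length_mul_simple_one_iff (by omega) (by push_cast; omega)]
    omega
end Descent

end ArcSum

end CoxeterSystem

/-- The multiplication table of the descent algebra of the dihedral Coxeter group of type
`I₂(n)`, with `x₁ = x_{{0}}`, `x₂ = x_{{1}}`, `x₃ = x_∅`, `ℓ = ⌊n/2⌋` and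
`ε = 1` if `n` is even, `ε = 0` otherwise. -/
theorem stmt_4 (F : Type*) [Field F] (n : ℕ) (hn : 4 ≤ n)
    (W : Type*) [Group W] [Fintype W]
    (cs : CoxeterSystem (CoxeterMatrix.I (n - 2)) W)
    (x₁ x₂ x₃ : MonoidAlgebra F W)
    (hx₁ : x₁ = descentElt F cs ({0} : Set (Fin 2)))
    (hx₂ : x₂ = descentElt F cs ({1} : Set (Fin 2)))
    (hx₃ : x₃ = descentElt F cs (∅ : Set (Fin 2)))
    (l e : ℕ) (hl : l = n / 2) (he : e = if Even n then 1 else 0) :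
    x₁ * x₁ = ((1 + e : ℕ) : F) • x₁ + ((l - e : ℕ) : F) • x₃ ∧
    x₁ * x₂ = ((1 - e : ℕ) : F) • x₂ + (l : F) • x₃ ∧
    x₂ * x₁ = ((1 - e : ℕ) : F) • x₁ + (l : F) • x₃ ∧
    x₂ * x₂ = ((1 + e : ℕ) : F) • x₂ + ((l - e : ℕ) : F) • x₃ ∧
    x₁ * x₃ = (n : F) • x₃ ∧
    x₃ * x₁ = (n : F) • x₃ ∧
    x₂ * x₃ = (n : F) • x₃ ∧
    x₃ * x₂ = (n : F) • x₃ ∧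
    x₃ * x₃ = ((2 * n : ℕ) : F) • x₃ := by
  obtain ⟨m, rfl⟩ : ∃ m, n = m + 2 := ⟨n - 2, by omega⟩
  subst hx₁ hx₂ hx₃ hl he
  simp only [Nat.cast_smul_eq_nsmul]
  rw [CoxeterSystem.descentElt_singleton_zero (m := m) cs,
    CoxeterSystem.descentElt_singleton_one (m := m) cs, descentElt_empty]
  exact ⟨cs.arcSum_zero_mul_arcSum_zero F, cs.arcSum_zero_mul_arcSum_neg F,
    cs.arcSum_neg_mul_arcSum_zero F, cs.arcSum_neg_mul_arcSum_neg F,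
    cs.arcSum_mul_sum_univ_of F 0, cs.sum_univ_of_mul_arcSum F 0,
    cs.arcSum_mul_sum_univ_of F _, cs.sum_univ_of_mul_arcSum F _,
    by rw [MonoidAlgebra.sum_univ_of_mul_self, CoxeterSystem.card_eq_of_I (m := m) cs]⟩
end

section
/- Suppose n is even, the characteristic of F is not 2, and n·1_F = 0 in F (so char F is an odd prime dividing n). Set e_U = 2⁻¹·x₁ − 4⁻¹·x₃, e_V = 2⁻¹·x₂ − 4⁻¹·x₃, and e_Z = 1 − e_U − e_V, all elements of F[W]. Then e_U² = e_U, e_V² = e_V, e_U·e_V = 0 = e_V·e_U, e_U·e_Z = e_Z·e_U = 0, e_V·e_Z = e_Z·e_V = 0, and e_Z·x₃·e_Z = x₃. -/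
open Finset

theorem Finset.sum_range_two_mul {M : Type*} [AddCommMonoid M] (f : ℕ → M) (n : ℕ) :
    ∑ p ∈ range (2 * n), f p = ∑ l ∈ range n, (f (2 * l) + f (2 * l + 1)) := by
  induction n with
  | zero => simp
  | succ n ih =>
    rw [mul_add, mul_one, sum_range_succ, sum_range_succ, sum_range_succ, ih, add_assoc]

section GeomSum

variable {A : Type*} [Ring A] {a : A} {N : ℕ}

theorem geom_sum_mul_pow_of_pow_eq_one (ha : a ^ N = 1) (j : ℕ) :
    (∑ i ∈ range N, a ^ i) * a ^ j = ∑ i ∈ range N, a ^ i := by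
  have hmul : (∑ i ∈ range N, a ^ i) * a = ∑ i ∈ range N, a ^ i := by
    have := geom_sum_mul a N
    rwa [ha, sub_self, mul_sub, mul_one, sub_eq_zero] at this
  induction j with
  | zero => rw [pow_zero, mul_one]
  | succ j ih => rw [pow_succ, ← mul_assoc, ih, hmul]

theorem pow_mul_geom_sum_of_pow_eq_one (ha : a ^ N = 1) (j : ℕ) :
    a ^ j * ∑ i ∈ range N, a ^ i = ∑ i ∈ range N, a ^ i := by
  conv_rhs => rw [← geom_sum_mul_pow_of_pow_eq_one ha j]
  rw [mul_sum, sum_mul]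
  exact sum_congr rfl fun i _ => pow_mul_comm a j i

theorem geom_sum_range_add_self (a : A) (k : ℕ) :
    ∑ i ∈ range (k + k), a ^ i = ∑ i ∈ range k, a ^ i + a ^ k * ∑ i ∈ range k, a ^ i := by
  rw [sum_range_add, mul_sum]
  simp only [pow_add]

end GeomSum

section TwoInvolutions

variable {A : Type*} [Ring A] {σ τ : A} {k : ℕ}

/- With `σ = sᵢ` and `τ = sⱼ` in a dihedral group of order `4k`, this is `x_{i}`: the `w` with
`ℓ(w sᵢ) > ℓ(w)` are `(sᵢsⱼ)^l` and `sⱼ(sᵢsⱼ)^l` for `l < k`. -/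
def cosetRepSum (σ τ : A) (k : ℕ) : A := (1 + τ) * ∑ i ∈ range k, (σ * τ) ^ i

theorem mul_mul_swap_eq_one (hσ : σ * σ = 1) (hτ : τ * τ = 1) : σ * τ * (τ * σ) = 1 := by
  rw [mul_assoc, ← mul_assoc τ, hτ, one_mul, hσ]

theorem pow_mul_swap_pow_eq_one (hσ : σ * σ = 1) (hτ : τ * τ = 1) (l : ℕ) :
    (σ * τ) ^ l * (τ * σ) ^ l = 1 := by
  have hcomm : Commute (σ * τ) (τ * σ) := by
    rw [Commute, SemiconjBy, mul_mul_swap_eq_one hσ hτ, mul_mul_swap_eq_one hτ hσ]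
  rw [← hcomm.mul_pow, mul_mul_swap_eq_one hσ hτ, one_pow]

theorem pow_sub_eq_swap_pow (hσ : σ * σ = 1) (hτ : τ * τ = 1) {N l : ℕ}
    (ha : (σ * τ) ^ N = 1) (hl : l ≤ N) : (σ * τ) ^ (N - l) = (τ * σ) ^ l := by
  rw [← one_mul ((τ * σ) ^ l), ← ha, ← Nat.sub_add_cancel hl, pow_add, mul_assoc,
    pow_mul_swap_pow_eq_one hσ hτ, mul_one, Nat.sub_add_cancel hl]

theorem geom_sum_mul_left_factor :
    (∑ i ∈ range k, (σ * τ) ^ i) * σ = σ * ∑ i ∈ range k, (τ * σ) ^ i := by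
  rw [sum_mul, mul_sum]
  exact sum_congr rfl fun i _ => ((SemiconjBy.pow_right (mul_assoc σ τ σ).symm i).eq).symm

theorem geom_sum_mul_right_factor (hτ : τ * τ = 1) :
    (∑ i ∈ range k, (σ * τ) ^ i) * τ = τ * ∑ i ∈ range k, (τ * σ) ^ i := by
  rw [sum_mul, mul_sum]
  refine sum_congr rfl fun i _ => ((SemiconjBy.pow_right ?_ i).eq).symm
  rw [SemiconjBy, ← mul_assoc, hτ, one_mul, mul_assoc, hτ, mul_one]

theorem swap_mul_geom_sum_swap (hσ : σ * σ = 1) (hτ : τ * τ = 1) (ha : (σ * τ) ^ (k + k) = 1) :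
    τ * σ * ∑ i ∈ range k, (τ * σ) ^ i = (σ * τ) ^ k * ∑ i ∈ range k, (σ * τ) ^ i := by
  rw [mul_sum, mul_sum, ← sum_range_reflect]
  refine sum_congr rfl fun i hi => ?_
  have hi := mem_range.mp hi
  rw [← pow_succ', ← pow_add, ← pow_sub_eq_swap_pow hσ hτ ha (by omega)]
  congr 1
  omega

theorem geom_sum_swap_eq_sub (hσ : σ * σ = 1) (hτ : τ * τ = 1) (ha : (σ * τ) ^ (k + k) = 1) :
    ∑ i ∈ range k, (τ * σ) ^ i
      = ∑ i ∈ range (k + k), (σ * τ) ^ i - σ * τ * ∑ i ∈ range k, (σ * τ) ^ i := by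
  have hT := pow_mul_geom_sum_of_pow_eq_one ha 1
  rw [pow_one] at hT
  calc ∑ i ∈ range k, (τ * σ) ^ i = σ * τ * (τ * σ * ∑ i ∈ range k, (τ * σ) ^ i) := by
        rw [← mul_assoc, mul_mul_swap_eq_one hσ hτ, one_mul]
    _ = σ * τ * (∑ i ∈ range (k + k), (σ * τ) ^ i - ∑ i ∈ range k, (σ * τ) ^ i) := by
        rw [swap_mul_geom_sum_swap hσ hτ ha, geom_sum_range_add_self, add_sub_cancel_left]
    _ = _ := by rw [mul_sub, hT]

theorem geom_sum_mul_swap_pow (hσ : σ * σ = 1) (hτ : τ * τ = 1) (ha : (σ * τ) ^ (k + k) = 1)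
    (j : ℕ) :
    (∑ i ∈ range (k + k), (σ * τ) ^ i) * (τ * σ) ^ j = ∑ i ∈ range (k + k), (σ * τ) ^ i := by
  rw [← geom_sum_mul_pow_of_pow_eq_one ha j, mul_assoc, pow_mul_swap_pow_eq_one hσ hτ, mul_one,
    geom_sum_mul_pow_of_pow_eq_one ha j]

theorem cosetRepSum_mul_one_add (hσ : σ * σ = 1) (hτ : τ * τ = 1) (ha : (σ * τ) ^ (k + k) = 1) :
    cosetRepSum σ τ k * (1 + σ) = (1 + τ) * ∑ i ∈ range (k + k), (σ * τ) ^ i := by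
  have hσ' : (1 + τ) * σ = (1 + τ) * (τ * σ) := by
    rw [add_mul, add_mul, one_mul, one_mul, ← mul_assoc, hτ, one_mul, add_comm]
  rw [cosetRepSum, mul_assoc, mul_add, mul_one, geom_sum_mul_left_factor, geom_sum_range_add_self,
    ← swap_mul_geom_sum_swap hσ hτ ha, mul_add, mul_add, ← mul_assoc, hσ', mul_assoc, mul_assoc]

theorem cosetRepSum_mul_cosetRepSum_swap (hσ : σ * σ = 1) (hτ : τ * τ = 1)
    (ha : (σ * τ) ^ (k + k) = 1) :
    cosetRepSum σ τ k * cosetRepSum τ σ k = k • (cosetRepSum σ τ k * (1 + σ)) := by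
  rw [cosetRepSum_mul_one_add hσ hτ ha, cosetRepSum.eq_1 τ σ, ← mul_assoc,
    cosetRepSum_mul_one_add hσ hτ ha, mul_assoc, mul_sum,
    sum_congr rfl fun j _ => geom_sum_mul_swap_pow hσ hτ ha j, sum_const, card_range, mul_smul_comm]

theorem cosetRepSum_mul_self_eq_one_add_mul (hτ : τ * τ = 1) :
    cosetRepSum σ τ k * cosetRepSum σ τ k
      = (1 + τ) * ((∑ i ∈ range k, (σ * τ) ^ i + ∑ i ∈ range k, (τ * σ) ^ i)
        * ∑ i ∈ range k, (σ * τ) ^ i) := by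
  have hτ' : (1 + τ) * τ = 1 + τ := by rw [add_mul, one_mul, hτ, add_comm]
  rw [cosetRepSum, mul_assoc, ← mul_assoc _ (1 + τ), mul_add, mul_one,
    geom_sum_mul_right_factor hτ, ← mul_assoc, mul_add, ← mul_assoc, hτ', ← mul_add, mul_assoc]

theorem cosetRepSum_mul_self (hσ : σ * σ = 1) (hτ : τ * τ = 1) (ha : (σ * τ) ^ (k + k) = 1) :
    cosetRepSum σ τ k * cosetRepSum σ τ k + cosetRepSum σ τ k * (1 + σ)
      = 2 • cosetRepSum σ τ k + k • (cosetRepSum σ τ k * (1 + σ)) := by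
  have hTR : (∑ i ∈ range (k + k), (σ * τ) ^ i) * ∑ i ∈ range k, (σ * τ) ^ i
      = k • ∑ i ∈ range (k + k), (σ * τ) ^ i := by
    rw [mul_sum, sum_congr rfl fun j _ => geom_sum_mul_pow_of_pow_eq_one ha j, sum_const,
      card_range]
  have hgeom := mul_neg_geom_sum (σ * τ) k
  have hT := geom_sum_range_add_self (σ * τ) k
  rw [cosetRepSum_mul_self_eq_one_add_mul hτ, geom_sum_swap_eq_sub hσ hτ ha,
    cosetRepSum_mul_one_add hσ hτ ha, cosetRepSum]
  set R := ∑ i ∈ range k, (σ * τ) ^ i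
  set T := ∑ i ∈ range (k + k), (σ * τ) ^ i
  have hsum : (R + (T - σ * τ * R)) * R + T = k • T + 2 • R :=
    calc (R + (T - σ * τ * R)) * R + T = T * R + ((1 - σ * τ) * R) * R + T := by noncomm_ring
      _ = k • T + 2 • R := by rw [hTR, hgeom, hT]; noncomm_ring
  rw [← mul_add, hsum, mul_add, mul_smul_comm, mul_smul_comm, add_comm]

end TwoInvolutions

theorem orthogonal_idempotents_of_relations {F A : Type*} [Field F] [Ring A] [Algebra F A]
    (h2 : (2 : F) ≠ 0) {x y z eU eV eZ : A}
    (hxx : x * x = 2 • x - z) (hyy : y * y = 2 • y - z) (hxy : x * y = 0) (hyx : y * x = 0)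
    (hxz : x * z = 0) (hzx : z * x = 0) (hyz : y * z = 0) (hzy : z * y = 0) (hzz : z * z = 0)
    (heU : eU = (2 : F)⁻¹ • x - (4 : F)⁻¹ • z) (heV : eV = (2 : F)⁻¹ • y - (4 : F)⁻¹ • z)
    (heZ : eZ = 1 - eU - eV) :
    eU * eU = eU ∧ eV * eV = eV ∧
    eU * eV = 0 ∧ eV * eU = 0 ∧
    eU * eZ = 0 ∧ eZ * eU = 0 ∧
    eV * eZ = 0 ∧ eZ * eV = 0 ∧
    eZ * z * eZ = z := by
  have h4 : (4 : F)⁻¹ = 2⁻¹ * 2⁻¹ := by rw [← mul_inv]; norm_num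
  have hUU : eU * eU = eU := by
    simp only [heU, h4, sub_mul, mul_sub, smul_mul_smul_comm, hxx, hxz, hzx, hzz, smul_zero,
      sub_zero]
    match_scalars <;> field_simp
  have hVV : eV * eV = eV := by
    simp only [heV, h4, sub_mul, mul_sub, smul_mul_smul_comm, hyy, hyz, hzy, hzz, smul_zero,
      sub_zero]
    match_scalars <;> field_simp
  have hUV : eU * eV = 0 := by
    simp [heU, heV, sub_mul, mul_sub, hxy, hxz, hzy, hzz]
  have hVU : eV * eU = 0 := by
    simp [heU, heV, sub_mul, mul_sub, hyx, hyz, hzx, hzz]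
  have hUz : eU * z = 0 := by simp [heU, sub_mul, hxz, hzz]
  have hVz : eV * z = 0 := by simp [heV, sub_mul, hyz, hzz]
  have hzU : z * eU = 0 := by simp [heU, mul_sub, hzx, hzz]
  have hzV : z * eV = 0 := by simp [heV, mul_sub, hzy, hzz]
  refine ⟨hUU, hVV, hUV, hVU, ?_, ?_, ?_, ?_, ?_⟩
  · rw [heZ, mul_sub, mul_sub, mul_one, hUU, hUV, sub_self, sub_zero]
  · rw [heZ, sub_mul, sub_mul, one_mul, hUU, hVU, sub_self, sub_zero]
  · rw [heZ, mul_sub, mul_sub, mul_one, hVV, hVU, sub_zero, sub_self]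
  · rw [heZ, sub_mul, sub_mul, one_mul, hVV, hUV, sub_zero, sub_self]
  · have hZz : eZ * z = z := by rw [heZ, sub_mul, sub_mul, one_mul, hUz, hVz, sub_zero, sub_zero]
    have hzZ : z * eZ = z := by rw [heZ, mul_sub, mul_sub, mul_one, hzU, hzV, sub_zero, sub_zero]
    rw [hZz, hzZ]

theorem CoxeterMatrix.I_apply_of_ne (m : ℕ) {i j : Fin 2} (hij : i ≠ j) :
    CoxeterMatrix.I m i j = m + 2 := by
  simp [CoxeterMatrix.I, hij]

namespace CoxeterSystem

theorem lengthParity_wordProd {B W : Type*} [Group W] {M : CoxeterMatrix B}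
    (cs : CoxeterSystem M W) (ω : List B) :
    cs.lengthParity (cs.wordProd ω) = Multiplicative.ofAdd (ω.length : ZMod 2) := by
  rw [wordProd, map_list_prod, List.map_map, lengthParity_comp_simple, List.map_const',
    List.prod_replicate, ← ofAdd_nsmul, nsmul_one]

variable {W : Type*} [Group W]

theorem exists_eq_wordProd_alternatingWord {M : CoxeterMatrix (Fin 2)} (cs : CoxeterSystem M W)
    (w : W) : ∃ i j : Fin 2, i ≠ j ∧ w = cs.wordProd (alternatingWord i j (cs.length w)) := by
  generalize hl : cs.length w = l
  induction l generalizing w with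
  | zero => exact ⟨0, 1, by decide, by simpa [alternatingWord] using hl⟩
  | succ l ih =>
    obtain ⟨k, hk⟩ := cs.exists_rightDescent_of_ne_one
      (by rintro rfl; simp at hl : w ≠ 1)
    have hlk : cs.length (w * cs.simple k) = l := by
      have := cs.isRightDescent_iff.mp hk; omega
    have hw : w = w * cs.simple k * cs.simple k := (cs.simple_mul_simple_cancel_right k).symm
    have other : ∀ a : Fin 2, a + 1 ≠ a := by decide
    obtain ⟨i, j, hij, hwk⟩ := ih _ hlk
    rcases l with _ | l
    · refine ⟨k + 1, k, other k, ?_⟩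
      rw [hw, hwk]
      simp [alternatingWord]
    · have hjk : j ≠ k := by
        rintro rfl
        have hw' : w = cs.wordProd (alternatingWord j i l) := by
          rw [hw, hwk, alternatingWord_succ, wordProd_concat, simple_mul_simple_cancel_right]
        have := cs.length_wordProd_le (alternatingWord j i l)
        rw [← hw', hl, length_alternatingWord] at this
        omega
      have fin_two : ∀ a b c : Fin 2, a ≠ b → b ≠ c → a = c := by decide
      obtain rfl := fin_two i j k hij hjk
      refine ⟨j, i, hjk, ?_⟩
      rw [hw, hwk, ← wordProd_concat, ← alternatingWord_succ]

theorem eq_wordProd_alternatingWord_or {M : CoxeterMatrix (Fin 2)} (cs : CoxeterSystem M W)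
    {i j : Fin 2} (hij : i ≠ j) (w : W) :
    w = cs.wordProd (alternatingWord i j (cs.length w)) ∨
      w = cs.wordProd (alternatingWord j i (cs.length w)) := by
  obtain ⟨i', j', hij', hw⟩ := cs.exists_eq_wordProd_alternatingWord w
  have fin_two : ∀ a b c d : Fin 2, a ≠ b → c ≠ d → (c = a ∧ d = b) ∨ (c = b ∧ d = a) := by
    decide
  rcases fin_two i j i' j' hij hij' with ⟨rfl, rfl⟩ | ⟨rfl, rfl⟩
  · exact .inl hw
  · exact .inr hw

variable {m : ℕ} (cs : CoxeterSystem (CoxeterMatrix.I m) W)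

theorem length_le_add_two (w : W) : cs.length w ≤ m + 2 := by
  obtain ⟨i, j, hij, hw⟩ := cs.exists_eq_wordProd_alternatingWord w
  by_contra! hlt
  refine cs.not_isReduced_alternatingWord i j (by simp [CoxeterMatrix.I_apply_of_ne m hij])
    (by rwa [CoxeterMatrix.I_apply_of_ne m hij]) ?_
  rw [IsReduced, ← hw, length_alternatingWord]

theorem orderOf_simple_zero_mul_simple_one :
    orderOf (cs.simple 0 * cs.simple 1) = m + 2 := by
  -- `sᵢ ↦ sr i` lifts to `DihedralGroup (m + 2)`, where `s₀ s₁ ↦ r 1` has order `m + 2`.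
  have hlift : (CoxeterMatrix.I m).IsLiftable
      (fun k : Fin 2 => DihedralGroup.sr ((k : ℕ) : ZMod (m + 2))) := by
    intro k k'
    by_cases hk : k = k'
    · subst hk
      simp [CoxeterMatrix.I]
    · simp [CoxeterMatrix.I_apply_of_ne m hk, DihedralGroup.r_pow]
  refine Nat.dvd_antisymm (orderOf_dvd_of_pow_eq_one ?_) ?_
  · simpa [CoxeterMatrix.I_apply_of_ne m (by decide : (0 : Fin 2) ≠ 1)]
      using cs.simple_mul_simple_pow 0 1
  · have := orderOf_map_dvd (cs.lift ⟨_, hlift⟩) (cs.simple 0 * cs.simple 1)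
    simpa [DihedralGroup.sr_mul_sr, DihedralGroup.orderOf_r_one] using this

theorem orderOf_simple_mul_simple {i j : Fin 2} (hij : i ≠ j) :
    orderOf (cs.simple i * cs.simple j) = m + 2 := by
  have fin_two : ∀ a b : Fin 2, a ≠ b → (a = 0 ∧ b = 1) ∨ (a = 1 ∧ b = 0) := by decide
  rcases fin_two i j hij with ⟨rfl, rfl⟩ | ⟨rfl, rfl⟩
  · exact cs.orderOf_simple_zero_mul_simple_one
  · rw [← orderOf_inv, mul_inv_rev, inv_simple, inv_simple, orderOf_simple_zero_mul_simple_one]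

theorem wordProd_alternatingWord_injOn {i j : Fin 2} (hij : i ≠ j) :
    Set.InjOn (fun p => cs.wordProd (alternatingWord i j p)) (Set.Iio (2 * (m + 2))) := by
  intro p hp q hq hpq
  rw [Set.mem_Iio] at hp hq
  have hpar : p % 2 = q % 2 := by
    simpa only [lengthParity_wordProd, length_alternatingWord, EmbeddingLike.apply_eq_iff_eq,
      ZMod.natCast_eq_natCast_iff'] using congrArg cs.lengthParity hpq
  have heven : Even p ↔ Even q := by simp only [Nat.even_iff, hpar]
  simp only [prod_alternatingWord_eq_mul_pow, heven, mul_right_inj] at hpq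
  have := pow_injOn_Iio_orderOf (x := cs.simple i * cs.simple j)
    (by rw [Set.mem_Iio, orderOf_simple_mul_simple cs hij]; omega)
    (by rw [Set.mem_Iio, orderOf_simple_mul_simple cs hij]; omega) hpq
  omega

theorem length_wordProd_alternatingWord {i j : Fin 2} (hij : i ≠ j) {p : ℕ} (hp : p ≤ m + 2) :
    cs.length (cs.wordProd (alternatingWord i j p)) = p := by
  have hl := cs.length_wordProd_le (alternatingWord i j p)
  rw [length_alternatingWord] at hl
  have hinj := cs.wordProd_alternatingWord_injOn hij
  rcases cs.eq_wordProd_alternatingWord_or hij (cs.wordProd (alternatingWord i j p)) with h | h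
  · exact (hinj (Set.mem_Iio.mpr (by omega)) (Set.mem_Iio.mpr (by omega)) h).symm
  · set l := cs.length (cs.wordProd (alternatingWord i j p))
    rcases Nat.eq_zero_or_pos l with hl0 | hl0
    · rw [hl0] at h ⊢
      exact (hinj (Set.mem_Iio.mpr (by omega)) (Set.mem_Iio.mpr (by omega)) h).symm
    · rw [cs.prod_alternatingWord_eq_prod_alternatingWord_sub j i l
        (by rw [CoxeterMatrix.I_apply_of_ne m hij.symm]; omega),
        CoxeterMatrix.I_apply_of_ne m hij.symm] at h
      have := hinj (Set.mem_Iio.mpr (by omega)) (Set.mem_Iio.mpr (by omega)) h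
      omega

theorem length_lt_length_mul_simple_iff {i j : Fin 2} (hij : i ≠ j) (w : W) :
    cs.length w < cs.length (w * cs.simple i) ↔
      ∃ p < m + 2, cs.wordProd (alternatingWord i j p) = w := by
  constructor
  · intro hlt
    have hnot : ∀ l, cs.length w = l + 1 → w ≠ cs.wordProd (alternatingWord j i (l + 1)) := by
      intro l hl hw
      have hws : w * cs.simple i = cs.wordProd (alternatingWord i j l) := by
        rw [hw, alternatingWord_succ, wordProd_concat, simple_mul_simple_cancel_right]
      have := cs.length_wordProd_le (alternatingWord i j l)
      rw [← hws, length_alternatingWord] at this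
      omega
    rcases cs.eq_wordProd_alternatingWord_or hij w with hw | hw
    · rcases (cs.length_le_add_two w).lt_or_eq with hlt' | heq
      · exact ⟨_, hlt', hw.symm⟩
      · refine absurd ?_ (hnot (m + 1) heq)
        have hbraid := cs.wordProd_braidWord_eq i j
        simp only [braidWord, CoxeterMatrix.I_apply_of_ne m hij,
          CoxeterMatrix.I_apply_of_ne m hij.symm] at hbraid
        rw [hw, heq, hbraid]
    · rcases Nat.eq_zero_or_pos (cs.length w) with h0 | hpos
      · rw [h0] at hw
        exact ⟨0, by omega, hw.symm⟩
      · obtain ⟨l, hl⟩ := Nat.exists_eq_succ_of_ne_zero hpos.ne'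
        rw [hl] at hw
        exact absurd hw (hnot l hl)
  · rintro ⟨p, hp, rfl⟩
    rw [← wordProd_concat, ← alternatingWord_succ, length_wordProd_alternatingWord cs hij hp.le,
      length_wordProd_alternatingWord cs hij.symm hp]
    omega

end CoxeterSystem

namespace MonoidAlgebra

variable {k G ι : Type*} [Semiring k] [Group G] [Fintype G]

theorem sum_univ_of_mul_sum_of (s : Finset ι) (f : ι → G) :
    (∑ x : G, of k G x) * ∑ i ∈ s, of k G (f i) = #s • ∑ x : G, of k G x := by
  rw [mul_sum, ← sum_const]
  refine sum_congr rfl fun i _ => ?_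
  rw [sum_mul]
  exact Fintype.sum_equiv (Equiv.mulRight (f i)) _ _ fun x => (map_mul _ _ _).symm

theorem sum_of_mul_sum_univ_of (s : Finset ι) (f : ι → G) :
    (∑ i ∈ s, of k G (f i)) * ∑ x : G, of k G x = #s • ∑ x : G, of k G x := by
  rw [sum_mul, ← sum_const]
  refine sum_congr rfl fun i _ => ?_
  rw [mul_sum]
  exact Fintype.sum_equiv (Equiv.mulLeft (f i)) _ _ fun x => (map_mul _ _ _).symm

end MonoidAlgebra

open MonoidAlgebra

section SimpleReflections

variable (F : Type*) [Field F] {W : Type*} [Group W]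

theorem of_simple_mul_self {B : Type*} {M : CoxeterMatrix B} (cs : CoxeterSystem M W) (i : B) :
    of F W (cs.simple i) * of F W (cs.simple i) = 1 := by
  rw [← map_mul, cs.simple_mul_simple_self, map_one]

theorem of_simple_mul_simple_pow {m : ℕ} (cs : CoxeterSystem (CoxeterMatrix.I m) W) {i j : Fin 2}
    (hij : i ≠ j) : (of F W (cs.simple i) * of F W (cs.simple j)) ^ (m + 2) = 1 := by
  rw [← map_mul, ← map_pow, ← CoxeterMatrix.I_apply_of_ne m hij, cs.simple_mul_simple_pow,
    map_one]

end SimpleReflections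

section Descent

variable (F : Type*) [Field F] {B W : Type*} [Group W] [Fintype W] {M : CoxeterMatrix B}
  (cs : CoxeterSystem M W)

theorem descentElt_empty_s6 : descentElt F cs ∅ = ∑ w : W, of F W w := by
  simp [descentElt]

theorem descentElt_singleton (i : B) :
    descentElt F cs {i} = ∑ w : W, if cs.length w < cs.length (w * cs.simple i)
      then of F W w else 0 := by
  simp [descentElt]

theorem descentElt_singleton_mul_one_add (i : B) :
    descentElt F cs {i} * (1 + of F W (cs.simple i)) = descentElt F cs ∅ := by
  have hshift : (∑ w : W, if cs.length w < cs.length (w * cs.simple i) then of F W w else 0)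
      * of F W (cs.simple i)
      = ∑ v : W, if cs.length (v * cs.simple i) < cs.length v then of F W v else 0 := by
    rw [sum_mul]
    refine Fintype.sum_equiv (Equiv.mulRight (cs.simple i)) _ _ fun w => ?_
    rw [Equiv.coe_mulRight, cs.simple_mul_simple_cancel_right, ite_mul, zero_mul, ← map_mul]
  rw [descentElt_singleton, descentElt_empty_s6, mul_add, mul_one, hshift, ← sum_add_distrib]
  refine sum_congr rfl fun w _ => ?_
  rcases (cs.length_mul_simple_ne w i).lt_or_gt with h | h <;> simp [h, h.not_gt]

end Descent

section Dihedral

open CoxeterSystem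

variable (F : Type*) [Field F] {W : Type*} [Group W] [Fintype W] {m : ℕ}
  (cs : CoxeterSystem (CoxeterMatrix.I m) W) {i j : Fin 2}

theorem descentElt_singleton_eq_sum (hij : i ≠ j) :
    descentElt F cs {i} = ∑ p ∈ range (m + 2), of F W (cs.wordProd (alternatingWord i j p)) := by
  classical
  have hX : univ.filter (fun w => cs.length w < cs.length (w * cs.simple i))
      = (range (m + 2)).image fun p => cs.wordProd (alternatingWord i j p) := by
    ext w
    simp [cs.length_lt_length_mul_simple_iff hij]
  rw [descentElt_singleton, ← sum_filter, hX, sum_image]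
  intro p hp q hq hpq
  rw [coe_range, Set.mem_Iio] at hp hq
  exact cs.wordProd_alternatingWord_injOn hij (Set.mem_Iio.mpr (by omega))
    (Set.mem_Iio.mpr (by omega)) hpq

theorem descentElt_singleton_eq_cosetRepSum (hij : i ≠ j) {k : ℕ} (hk : m + 2 = k + k) :
    descentElt F cs {i} = cosetRepSum (of F W (cs.simple i)) (of F W (cs.simple j)) k := by
  rw [descentElt_singleton_eq_sum F cs hij, hk, ← two_mul, sum_range_two_mul, cosetRepSum, mul_sum]
  refine sum_congr rfl fun l _ => ?_
  have hodd : (2 * l + 1) / 2 = l := by omega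
  rw [prod_alternatingWord_eq_mul_pow, prod_alternatingWord_eq_mul_pow, if_pos (even_two_mul l),
    if_neg (by simp), Nat.mul_div_cancel_left l two_pos, hodd]
  simp [add_mul]

theorem descentElt_singleton_mul_self_add (hij : i ≠ j) {k : ℕ} (hk : m + 2 = k + k) :
    descentElt F cs {i} * descentElt F cs {i} + descentElt F cs ∅
      = 2 • descentElt F cs {i} + k • descentElt F cs ∅ := by
  rw [← descentElt_singleton_mul_one_add F cs i, descentElt_singleton_eq_cosetRepSum F cs hij hk]
  exact cosetRepSum_mul_self (of_simple_mul_self F cs i) (of_simple_mul_self F cs j)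
    (hk ▸ of_simple_mul_simple_pow F cs hij)

theorem descentElt_singleton_mul_singleton (hij : i ≠ j) {k : ℕ} (hk : m + 2 = k + k) :
    descentElt F cs {i} * descentElt F cs {j} = k • descentElt F cs ∅ := by
  rw [← descentElt_singleton_mul_one_add F cs i, descentElt_singleton_eq_cosetRepSum F cs hij hk,
    descentElt_singleton_eq_cosetRepSum F cs hij.symm hk]
  exact cosetRepSum_mul_cosetRepSum_swap (of_simple_mul_self F cs i) (of_simple_mul_self F cs j)
    (hk ▸ of_simple_mul_simple_pow F cs hij)

theorem descentElt_empty_mul_singleton (i : Fin 2) :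
    descentElt F cs ∅ * descentElt F cs {i} = (m + 2) • descentElt F cs ∅ := by
  rw [descentElt_singleton_eq_sum F cs (by fin_cases i <;> decide : i ≠ i + 1), descentElt_empty_s6,
    sum_univ_of_mul_sum_of, card_range]

theorem descentElt_singleton_mul_empty (i : Fin 2) :
    descentElt F cs {i} * descentElt F cs ∅ = (m + 2) • descentElt F cs ∅ := by
  rw [descentElt_singleton_eq_sum F cs (by fin_cases i <;> decide : i ≠ i + 1), descentElt_empty_s6,
    sum_of_mul_sum_univ_of, card_range]

theorem descentElt_relations_of_cast_eq_zero (hij : i ≠ j) {k : ℕ} (hk : m + 2 = k + k)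
    (hF : (k : F) = 0) :
    descentElt F cs {i} * descentElt F cs {i} = 2 • descentElt F cs {i} - descentElt F cs ∅ ∧
    descentElt F cs {i} * descentElt F cs {j} = 0 ∧
    descentElt F cs {i} * descentElt F cs ∅ = 0 ∧
    descentElt F cs ∅ * descentElt F cs {i} = 0 ∧
    descentElt F cs ∅ * descentElt F cs ∅ = 0 := by
  have hhalf : ∀ v : MonoidAlgebra F W, k • v = 0 := fun v => by
    rw [← Nat.cast_smul_eq_nsmul F, hF, zero_smul]
  have hfull : ∀ v : MonoidAlgebra F W, (m + 2) • v = 0 := fun v => by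
    rw [hk, add_nsmul, hhalf, add_zero]
  refine ⟨eq_sub_of_add_eq ?_, ?_, ?_, ?_, ?_⟩
  · rw [descentElt_singleton_mul_self_add F cs hij hk, hhalf, add_zero]
  · rw [descentElt_singleton_mul_singleton F cs hij hk, hhalf]
  · rw [descentElt_singleton_mul_empty, hfull]
  · rw [descentElt_empty_mul_singleton, hfull]
  · nth_rw 2 [← descentElt_singleton_mul_one_add F cs i]
    rw [← mul_assoc, descentElt_empty_mul_singleton, hfull, zero_mul]

end Dihedral

/-- If `n` is even, `char F ≠ 2` and `char F ∣ n`, the elements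
`e_U = 2⁻¹x₁ − 4⁻¹x₃`, `e_V = 2⁻¹x₂ − 4⁻¹x₃`, `e_Z = 1 − e_U − e_V` of the group algebra of
the dihedral Coxeter group of type `I₂(n)` form a set of orthogonal idempotents with
`e_Z x₃ e_Z = x₃`. -/
theorem stmt_6 (F : Type*) [Field F] (n : ℕ) (hn : 4 ≤ n)
    (W : Type*) [Group W] [Fintype W]
    (cs : CoxeterSystem (CoxeterMatrix.I (n - 2)) W)
    (hneven : Even n) (hchar : ringChar F ≠ 2) (hnF : (n : F) = 0)
    (x₁ x₂ x₃ eU eV eZ : MonoidAlgebra F W)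
    (hx₁ : x₁ = descentElt F cs ({0} : Set (Fin 2)))
    (hx₂ : x₂ = descentElt F cs ({1} : Set (Fin 2)))
    (hx₃ : x₃ = descentElt F cs (∅ : Set (Fin 2)))
    (heU : eU = (2 : F)⁻¹ • x₁ - (4 : F)⁻¹ • x₃)
    (heV : eV = (2 : F)⁻¹ • x₂ - (4 : F)⁻¹ • x₃)
    (heZ : eZ = 1 - eU - eV) :
    eU * eU = eU ∧ eV * eV = eV ∧
    eU * eV = 0 ∧ eV * eU = 0 ∧
    eU * eZ = 0 ∧ eZ * eU = 0 ∧
    eV * eZ = 0 ∧ eZ * eV = 0 ∧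
    eZ * x₃ * eZ = x₃ := by
  obtain ⟨k, hk⟩ := hneven
  have h2 : (2 : F) ≠ 0 := Ring.two_ne_zero hchar
  have hkF : (k : F) = 0 := by
    rw [hk, Nat.cast_add, ← two_mul] at hnF
    exact (mul_eq_zero.mp hnF).resolve_left h2
  have hm : n - 2 + 2 = k + k := by omega
  obtain ⟨h11, h12, h13, h31, h33⟩ :=
    descentElt_relations_of_cast_eq_zero F cs (by decide : (0 : Fin 2) ≠ 1) hm hkF
  obtain ⟨h22, h21, h23, h32, -⟩ :=
    descentElt_relations_of_cast_eq_zero F cs (by decide : (1 : Fin 2) ≠ 0) hm hkF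
  subst hx₁ hx₂ hx₃
  exact orthogonal_idempotents_of_relations h2 h11 h22 h12 h21 h13 h31 h23 h32 h33 heU heV heZ
end
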